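/- arXiv:1310.6770 — 4 statements merged into one kernel-verified Lean document; each statement's English description precedes it below -/
import Mathlib

section
/- For y(X) = ν_0 ∏_{i=1}^N h_i(X_i) + μ_0 + Σ_{i=1}^N g_i(X_i), the exact variance is σ² = ν_0²[∏_i (δ_i² + ν_i²) − ∏_i ν_i²] + Σ_i λ_i² + 2ν_0 (∏_i ν_i) Σ_i η_i²/ν_i, where η_i² = Cov(h_i(X_i), g_i(X_i)) and ν_i ≠ 0 for all i. -/
/-!
Write `y = ν₀ H + μ₀ + ∑ G_i` with `H x = ∏ h_i(x_i)` and `G_i x = g_i(x_i)`, so that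
`Var y = ν₀² Var H + 2 ν₀ ∑ Cov(H, G_i) + Var (∑ G_i)`. Under the product measure every
expectation of a product of single-coordinate factors factorizes: this gives
`E[H²] = ∏ (δ_i² + ν_i²)`, `Cov(H, G_i) = η_i² ∏_{k ≠ i} ν_k` (replace the `i`-th factor of `H`
by `h_i g_i`), and the independence of the coordinates gives `Var (∑ G_i) = ∑ λ_i²`.
-/

open MeasureTheory ProbabilityTheory Finset

theorem Finset.prod_apply_update {ι M : Type*} [Fintype ι] [DecidableEq ι] [CommMonoid M]
    {β : ι → Type*} (φ : (k : ι) → β k → M) (g : (k : ι) → β k) (i : ι) (v : β i) :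
    ∏ k, φ k (Function.update g i v k) = φ i v * ∏ k ∈ univ.erase i, φ k (g k) := by
  simp_rw [Function.apply_update φ g i v]
  rw [prod_update_of_mem (mem_univ i), sdiff_singleton_eq_erase]

namespace ProbabilityTheory

variable {ι : Type*} [Fintype ι] {Ω : ι → Type*} {mΩ : ∀ i, MeasurableSpace (Ω i)}
  {μ : (i : ι) → Measure (Ω i)} [∀ i, IsProbabilityMeasure (μ i)]

lemma memLp_two_prod_pi {f : (i : ι) → Ω i → ℝ} (hf : ∀ i, MemLp (f i) 2 (μ i)) :
    MemLp (fun x : (i : ι) → Ω i ↦ ∏ i, f i (x i)) 2 (Measure.pi μ) := by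
  have hmeas : AEStronglyMeasurable (fun x : (i : ι) → Ω i ↦ ∏ i, f i (x i)) (Measure.pi μ) :=
    aestronglyMeasurable_fun_prod _ fun i _ ↦
      (hf i).aestronglyMeasurable.comp_measurePreserving (measurePreserving_eval μ i)
  rw [memLp_two_iff_integrable_sq hmeas]
  simp_rw [← prod_pow]
  exact Integrable.fintype_prod_dep fun i ↦ (hf i).integrable_sq

lemma variance_prod_pi {f : (i : ι) → Ω i → ℝ} (hf : ∀ i, MemLp (f i) 2 (μ i)) :
    Var[fun x ↦ ∏ i, f i (x i); Measure.pi μ] =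
      ∏ i, (Var[f i; μ i] + (∫ t, f i t ∂μ i) ^ 2) - ∏ i, (∫ t, f i t ∂μ i) ^ 2 := by
  rw [variance_eq_sub (memLp_two_prod_pi hf)]
  simp only [Pi.pow_apply, ← prod_pow, integral_fintype_prod_eq_prod]
  rw [integral_fintype_prod_eq_prod (fun i t ↦ f i t ^ 2)]
  congr 1
  refine Finset.prod_congr rfl fun i _ ↦ ?_
  rw [variance_eq_sub (hf i)]
  simp

lemma covariance_prod_pi_comp_eval [DecidableEq ι] {f : (i : ι) → Ω i → ℝ} {i : ι}
    {g : Ω i → ℝ} (hf : ∀ i, MemLp (f i) 2 (μ i)) (hg : MemLp g 2 (μ i)) :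
    cov[fun x ↦ ∏ k, f k (x k), fun x ↦ g (x i); Measure.pi μ] =
      cov[f i, g; μ i] * ∏ k ∈ univ.erase i, ∫ t, f k t ∂μ k := by
  have hmul : ∀ x : (k : ι) → Ω k,
      (∏ k, f k (x k)) * g (x i) = ∏ k, Function.update f i (f i * g) k (x k) := fun x ↦ by
    have h := prod_apply_update (fun k (u : Ω k → ℝ) ↦ u (x k)) f i (f i * g)
    beta_reduce at h
    rw [h, ← mul_prod_erase univ _ (mem_univ i), Pi.mul_apply]
    ring
  have hint := prod_apply_update (fun k (u : Ω k → ℝ) ↦ ∫ t, u t ∂μ k) f i (f i * g)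
  beta_reduce at hint
  have hgi : MemLp (fun x : (k : ι) → Ω k ↦ g (x i)) 2 (Measure.pi μ) :=
    hg.comp_measurePreserving (measurePreserving_eval μ i)
  rw [covariance_eq_sub (memLp_two_prod_pi hf) hgi, covariance_eq_sub (hf i) hg]
  simp only [Pi.mul_apply, hmul, integral_fintype_prod_eq_prod, hint,
    integral_comp_eval hg.aestronglyMeasurable]
  rw [← mul_prod_erase univ _ (mem_univ i)]
  ring

end ProbabilityTheory

theorem variance_of_blended
    {N : ℕ} (μ : Fin N → Measure ℝ) [∀ i, IsProbabilityMeasure (μ i)]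
    (ν₀ μ₀ : ℝ) (h g : Fin N → ℝ → ℝ) (ν μm δ2 lam2 η2 : Fin N → ℝ)
    (hmemh : ∀ i, MemLp (h i) 2 (μ i)) (hmemg : ∀ i, MemLp (g i) 2 (μ i))
    (hν : ∀ i, ν i = ∫ t, h i t ∂(μ i)) (hνne : ∀ i, ν i ≠ 0)
    (hμm : ∀ i, μm i = ∫ t, g i t ∂(μ i))
    (hδ : ∀ i, δ2 i = ∫ t, (h i t - ν i) ^ 2 ∂(μ i))
    (hlam : ∀ i, lam2 i = ∫ t, (g i t - μm i) ^ 2 ∂(μ i))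
    (hη : ∀ i, η2 i = ∫ t, (h i t - ν i) * (g i t - μm i) ∂(μ i))
    (y : (Fin N → ℝ) → ℝ)
    (hy : ∀ x, y x = ν₀ * (∏ i, h i (x i)) + μ₀ + ∑ i, g i (x i)) :
    ∫ x, (y x - ∫ x', y x' ∂(Measure.pi μ)) ^ 2 ∂(Measure.pi μ) =
      ν₀ ^ 2 * ((∏ i, (δ2 i + (ν i) ^ 2)) - ∏ i, (ν i) ^ 2)
        + (∑ i, lam2 i)
        + 2 * ν₀ * (∏ i, ν i) * ∑ i, η2 i / ν i := by
  set H : (Fin N → ℝ) → ℝ := fun x ↦ ∏ i, h i (x i)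
  have hH : MemLp H 2 (Measure.pi μ) := memLp_two_prod_pi hmemh
  have hG : ∀ i, MemLp (fun x : Fin N → ℝ ↦ g i (x i)) 2 (Measure.pi μ) := fun i ↦
    (hmemg i).comp_measurePreserving (measurePreserving_eval μ i)
  have hS : MemLp (fun x : Fin N → ℝ ↦ ∑ i, g i (x i)) 2 (Measure.pi μ) :=
    memLp_finsetSum univ fun i _ ↦ hG i
  have hvar_h : ∀ i, Var[h i; μ i] = δ2 i := fun i ↦ by
    rw [variance_eq_integral (hmemh i).aemeasurable, hδ, hν]
  have hvar_g : ∀ i, Var[g i; μ i] = lam2 i := fun i ↦ by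
    rw [variance_eq_integral (hmemg i).aemeasurable, hlam, hμm]
  have hcov : ∀ i, cov[h i, g i; μ i] = η2 i := fun i ↦ by rw [covariance, hη, hν, hμm]
  have hy' : y = fun x ↦ (ν₀ * H x + ∑ i, g i (x i)) + μ₀ := funext fun x ↦ by rw [hy]; ring
  have hHS : MemLp (fun x ↦ ν₀ * H x + ∑ i, g i (x i)) 2 (Measure.pi μ) :=
    (hH.const_mul ν₀).add hS
  have hy_meas : AEMeasurable y (Measure.pi μ) := by
    rw [hy']; exact (hHS.aestronglyMeasurable.add_const μ₀).aemeasurable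
  rw [← variance_eq_integral hy_meas, hy', variance_add_const hHS.aestronglyMeasurable,
    variance_fun_add (hH.const_mul ν₀) hS,
    variance_const_mul, covariance_const_mul_left, covariance_fun_sum_right hG hH,
    ← Finset.sum_fn, variance_sum_pi hmemg]
  simp only [H, variance_prod_pi hmemh, covariance_prod_pi_comp_eval hmemh (hmemg _), hvar_h,
    hvar_g, hcov, ← hν]
  have hcross : ∑ i, η2 i * ∏ k ∈ univ.erase i, ν k = (∏ k, ν k) * ∑ i, η2 i / ν i := by
    rw [mul_sum]
    refine sum_congr rfl fun i _ ↦ ?_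
    rw [← prod_erase_mul _ _ (mem_univ i)]
    field_simp [hνne i]
  linear_combination 2 * ν₀ * hcross
end

section
/- Given zero-mean square-integrable random variables w, w̃, ŵ with E[w w̃] = E[w̃ ŵ] = E[w̃²] = σ̃² and E[ŵ²] = σ̂² with σ̂² > σ̃², define α = (σ̂² − E[w ŵ])/(σ̂² − σ̃²) and w̄ = α w̃ + (1−α) ŵ. Then E[(w − w̄)²] ≤ E[(w − w̃)²] and E[(w − w̄)²] ≤ E[(w − ŵ)²]; specifically E[(w−w̄)²] − E[(w−w̃)²] = −(1−α)²(σ̂²−σ̃²) and E[(w−w̄)²] − E[(w−ŵ)²] = −α²(σ̂²−σ̃²). -/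
/-! The hybrid `b = α t + (1 - α) h` is the orthogonal projection of `w` onto the line through
`t` and `h`: the choice of `α` makes `w - b ⊥ h - t`. Since `t` and `h` lie on that line,
Pythagoras gives `‖w - t‖² = ‖w - b‖² + (1 - α)² ‖h - t‖²` and
`‖w - h‖² = ‖w - b‖² + α² ‖h - t‖²`, while `t ⊥ h - t` gives `‖h - t‖² = ‖h‖² - ‖t‖²`.
The integrals of the statement are these inner products in `L²(P)`. -/

open MeasureTheory

open scoped RealInnerProductSpace

section Hybrid

variable {E : Type*} [NormedAddCommGroup E] [InnerProductSpace ℝ E]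

theorem norm_add_smul_sq_of_inner_eq_zero {x y : E} (c : ℝ) (hxy : ⟪x, y⟫ = 0) :
    ‖x + c • y‖ ^ 2 = ‖x‖ ^ 2 + c ^ 2 * ‖y‖ ^ 2 := by
  rw [norm_add_sq_real, inner_smul_right, hxy, norm_smul, mul_pow, Real.norm_eq_abs, sq_abs]
  ring

theorem norm_sub_sq_eq_of_inner_eq {t h : E} (hth : ⟪t, h⟫ = ‖t‖ ^ 2) :
    ‖h - t‖ ^ 2 = ‖h‖ ^ 2 - ‖t‖ ^ 2 := by
  rw [norm_sub_sq_real, real_inner_comm, hth]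
  ring

variable {w t h : E} {α : ℝ}

theorem inner_sub_hybrid_sub_eq_zero (hwt : ⟪w, t⟫ = ‖t‖ ^ 2) (hth : ⟪t, h⟫ = ‖t‖ ^ 2)
    (hα : α * (‖h‖ ^ 2 - ‖t‖ ^ 2) = ‖h‖ ^ 2 - ⟪w, h⟫) :
    ⟪w - (α • t + (1 - α) • h), h - t⟫ = 0 := by
  simp only [inner_sub_left, inner_sub_right, inner_add_left, inner_smul_left,
    real_inner_self_eq_norm_sq, RCLike.conj_to_real]
  rw [real_inner_comm t h, hwt, hth]
  linear_combination hα

theorem norm_sub_hybrid_sq_add_left (hwt : ⟪w, t⟫ = ‖t‖ ^ 2) (hth : ⟪t, h⟫ = ‖t‖ ^ 2)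
    (hα : α * (‖h‖ ^ 2 - ‖t‖ ^ 2) = ‖h‖ ^ 2 - ⟪w, h⟫) :
    ‖w - (α • t + (1 - α) • h)‖ ^ 2 + (1 - α) ^ 2 * (‖h‖ ^ 2 - ‖t‖ ^ 2) = ‖w - t‖ ^ 2 := by
  have hsplit : w - t = w - (α • t + (1 - α) • h) + (1 - α) • (h - t) := by
    simp only [smul_sub, sub_smul, one_smul]; abel
  rw [hsplit, norm_add_smul_sq_of_inner_eq_zero _ (inner_sub_hybrid_sub_eq_zero hwt hth hα),
    norm_sub_sq_eq_of_inner_eq hth]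

theorem norm_sub_hybrid_sq_add_right (hwt : ⟪w, t⟫ = ‖t‖ ^ 2) (hth : ⟪t, h⟫ = ‖t‖ ^ 2)
    (hα : α * (‖h‖ ^ 2 - ‖t‖ ^ 2) = ‖h‖ ^ 2 - ⟪w, h⟫) :
    ‖w - (α • t + (1 - α) • h)‖ ^ 2 + α ^ 2 * (‖h‖ ^ 2 - ‖t‖ ^ 2) = ‖w - h‖ ^ 2 := by
  have hsplit : w - h = w - (α • t + (1 - α) • h) + (-α) • (h - t) := by
    simp only [smul_sub, sub_smul, one_smul, neg_smul]; abel
  rw [hsplit, norm_add_smul_sq_of_inner_eq_zero _ (inner_sub_hybrid_sub_eq_zero hwt hth hα),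
    norm_sub_sq_eq_of_inner_eq hth, neg_sq]

end Hybrid

namespace MeasureTheory.L2

variable {Ω : Type*} [MeasurableSpace Ω] {P : Measure Ω} {f g : Ω → ℝ} {F G : Lp ℝ 2 P}

theorem integral_mul_eq_inner (hF : F =ᵐ[P] f) (hG : G =ᵐ[P] g) :
    ∫ ω, f ω * g ω ∂P = ⟪F, G⟫ := by
  rw [inner_def]
  refine integral_congr_ae ?_
  filter_upwards [hF, hG] with ω hFω hGω
  rw [hFω, hGω, real_inner_eq_re_inner, RCLike.inner_apply, conj_trivial, mul_comm]
  rfl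

theorem integral_sq_eq_norm_sq (hF : F =ᵐ[P] f) : ∫ ω, f ω ^ 2 ∂P = ‖F‖ ^ 2 := by
  rw [← real_inner_self_eq_norm_sq, ← integral_mul_eq_inner hF hF]
  simp only [sq]

end MeasureTheory.L2

theorem linear_hybrid_error_optimality_general
    {Ω : Type*} [MeasurableSpace Ω] (P : Measure Ω)
    (w wt wh : Ω → ℝ)
    (hmw : MemLp w 2 P) (hmwt : MemLp wt 2 P) (hmwh : MemLp wh 2 P)
    (σt2 σh2 : ℝ)
    (hσt : σt2 = ∫ ω, (wt ω) ^ 2 ∂P) (hσh : σh2 = ∫ ω, (wh ω) ^ 2 ∂P)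
    (h1 : ∫ ω, w ω * wt ω ∂P = σt2) (h2 : ∫ ω, wt ω * wh ω ∂P = σt2)
    (hlt : σt2 < σh2)
    (α : ℝ) (hα : α = (σh2 - ∫ ω, w ω * wh ω ∂P) / (σh2 - σt2))
    (wb : Ω → ℝ) (hwb : ∀ ω, wb ω = α * wt ω + (1 - α) * wh ω) :
    (∫ ω, (w ω - wb ω) ^ 2 ∂P ≤ ∫ ω, (w ω - wt ω) ^ 2 ∂P) ∧
    (∫ ω, (w ω - wb ω) ^ 2 ∂P ≤ ∫ ω, (w ω - wh ω) ^ 2 ∂P) ∧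
    ((∫ ω, (w ω - wb ω) ^ 2 ∂P) - ∫ ω, (w ω - wt ω) ^ 2 ∂P
      = -((1 - α) ^ 2) * (σh2 - σt2)) ∧
    ((∫ ω, (w ω - wb ω) ^ 2 ∂P) - ∫ ω, (w ω - wh ω) ^ 2 ∂P
      = -(α ^ 2) * (σh2 - σt2)) := by
  obtain rfl : wb = fun ω => α * wt ω + (1 - α) * wh ω := funext hwb
  set W := hmw.toLp w
  set T := hmwt.toLp wt
  set H := hmwh.toLp wh
  have hW : W =ᵐ[P] w := hmw.coeFn_toLp
  have hT : T =ᵐ[P] wt := hmwt.coeFn_toLp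
  have hH : H =ᵐ[P] wh := hmwh.coeFn_toLp
  have hWT : ⇑(W - T) =ᵐ[P] fun ω => w ω - wt ω := (Lp.coeFn_sub W T).trans (hW.sub hT)
  have hWH : ⇑(W - H) =ᵐ[P] fun ω => w ω - wh ω := (Lp.coeFn_sub W H).trans (hW.sub hH)
  have hWB : ⇑(W - (α • T + (1 - α) • H)) =ᵐ[P]
      fun ω => w ω - (α * wt ω + (1 - α) * wh ω) :=
    (Lp.coeFn_sub _ _).trans <| hW.sub <| (Lp.coeFn_add _ _).trans <|
      ((Lp.coeFn_smul α T).trans (hT.const_smul α)).add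
        ((Lp.coeFn_smul (1 - α) H).trans (hH.const_smul (1 - α)))
  rw [L2.integral_sq_eq_norm_sq hT] at hσt
  rw [L2.integral_sq_eq_norm_sq hH] at hσh
  rw [L2.integral_mul_eq_inner hW hT] at h1
  rw [L2.integral_mul_eq_inner hT hH] at h2
  rw [L2.integral_mul_eq_inner hW hH] at hα
  subst hσt hσh
  have hα' : α * (‖H‖ ^ 2 - ‖T‖ ^ 2) = ‖H‖ ^ 2 - ⟪W, H⟫ := by
    rw [hα, div_mul_cancel₀ _ (sub_ne_zero.mpr hlt.ne')]
  rw [L2.integral_sq_eq_norm_sq hWB, L2.integral_sq_eq_norm_sq hWT, L2.integral_sq_eq_norm_sq hWH]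
  have hleft := norm_sub_hybrid_sq_add_left h1 h2 hα'
  have hright := norm_sub_hybrid_sq_add_right h1 h2 hα'
  have hgap : 0 ≤ ‖H‖ ^ 2 - ‖T‖ ^ 2 := sub_nonneg.mpr hlt.le
  refine ⟨?_, ?_, by linarith, by linarith⟩
  · linarith [mul_nonneg (sq_nonneg (1 - α)) hgap]
  · linarith [mul_nonneg (sq_nonneg α) hgap]

theorem linear_hybrid_error_optimality
    {Ω : Type*} [MeasurableSpace Ω] (P : Measure Ω) [IsProbabilityMeasure P]
    (w wt wh : Ω → ℝ)
    (hmw : MemLp w 2 P) (hmwt : MemLp wt 2 P) (hmwh : MemLp wh 2 P)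
    (hw0 : ∫ ω, w ω ∂P = 0) (hwt0 : ∫ ω, wt ω ∂P = 0) (hwh0 : ∫ ω, wh ω ∂P = 0)
    (σt2 σh2 : ℝ)
    (hσt : σt2 = ∫ ω, (wt ω) ^ 2 ∂P) (hσh : σh2 = ∫ ω, (wh ω) ^ 2 ∂P)
    (h1 : ∫ ω, w ω * wt ω ∂P = σt2) (h2 : ∫ ω, wt ω * wh ω ∂P = σt2)
    (hlt : σt2 < σh2)
    (α : ℝ) (hα : α = (σh2 - ∫ ω, w ω * wh ω ∂P) / (σh2 - σt2))
    (wb : Ω → ℝ) (hwb : ∀ ω, wb ω = α * wt ω + (1 - α) * wh ω) :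
    (∫ ω, (w ω - wb ω) ^ 2 ∂P ≤ ∫ ω, (w ω - wt ω) ^ 2 ∂P) ∧
    (∫ ω, (w ω - wb ω) ^ 2 ∂P ≤ ∫ ω, (w ω - wh ω) ^ 2 ∂P) ∧
    ((∫ ω, (w ω - wb ω) ^ 2 ∂P) - ∫ ω, (w ω - wt ω) ^ 2 ∂P
      = -((1 - α) ^ 2) * (σh2 - σt2)) ∧
    ((∫ ω, (w ω - wb ω) ^ 2 ∂P) - ∫ ω, (w ω - wh ω) ^ 2 ∂P
      = -(α ^ 2) * (σh2 - σt2)) :=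
  linear_hybrid_error_optimality_general P w wt wh hmw hmwt hmwh σt2 σh2 hσt hσh h1 h2 hlt α hα wb
    hwb
end

section
/- If the bivariate-and-higher ANOVA components are products of univariate ones, y_u(X_u) = y_∅ ∏_{i∈u} (y_{i}(X_i)/y_∅) for all |u| ≥ 2, then the univariate FDD approximation reproduces y exactly (ê_1 = 0), while the univariate ADD mean-squared error equals ẽ_1 = y_∅² Σ_{|u|≥2} ∏_{i∈u} E[y_{i}²(X_i)]/y_∅² > 0 provided at least one such product is positive. -/
/-!
Put `f i = y_{i} / y_∅`. The hypothesis makes `y` the full expansion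
`y_∅ ∏ i, (1 + f i) = y_∅ (1 + ∑ i, f i + ∑_{|u| ≥ 2} ∏_{i ∈ u} f i)`, which is the univariate FDD
approximation, and it leaves `y - ỹ₁ = y_∅ ∑_{|u| ≥ 2} ∏_{i ∈ u} f i (X i)`. Under the product
measure, `∏_{i ∈ u} f i * ∏_{i ∈ v} f i` integrates to the product of the one-dimensional integrals
of its factors; when `u ≠ v` some factor is a lone zero-mean `f i`, so the monomials are orthogonal
and the mean square of the residual is `y_∅² ∑_{|u| ≥ 2} ∏_{i ∈ u} E[f i²]`.
-/

open MeasureTheory Finset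

namespace Finset

theorem prod_one_add_eq_one_add_sum_add_sum_two_le_card {ι R : Type*} [Fintype ι]
    [DecidableEq ι] [CommSemiring R] (g : ι → R) :
    ∏ i, (1 + g i) = 1 + ∑ i, g i + ∑ u ∈ univ.filter (fun u : Finset ι => 2 ≤ u.card),
      ∏ i ∈ u, g i := by
  have hsmall : univ.filter (fun u : Finset ι => ¬ 2 ≤ u.card) =
      insert ∅ (univ.map ⟨singleton, singleton_injective⟩) := by
    ext u
    simp only [mem_filter, mem_univ, true_and, not_le, mem_insert, mem_map,
      Function.Embedding.coeFn_mk]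
    rw [Nat.lt_succ_iff, Nat.le_one_iff_eq_zero_or_eq_one, card_eq_zero, card_eq_one]
    simp [eq_comm]
  rw [prod_one_add, powerset_univ, ← sum_filter_not_add_sum_filter _ (2 ≤ ·.card), hsmall,
    sum_insert (by simp), sum_map]
  simp

theorem mul_prod_add_div_eq {ι K : Type*} [Fintype ι] [DecidableEq ι] [Field K] {c : K}
    (hc : c ≠ 0) (a : ι → K) :
    c * ∏ i, (c + a i) / c =
      c + ∑ i, a i + ∑ u ∈ univ.filter (fun u : Finset ι => 2 ≤ u.card), c * ∏ i ∈ u, a i / c := by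
  have hfactor : ∀ i, (c + a i) / c = 1 + a i / c := fun i => by rw [add_div, div_self hc]
  simp only [hfactor, prod_one_add_eq_one_add_sum_add_sum_two_le_card, mul_add, mul_one, mul_sum,
    mul_div_cancel₀ _ hc]

theorem prod_mul_prod_eq_prod_union {ι M : Type*} [DecidableEq ι] [CommMonoid M]
    (u v : Finset ι) (g : ι → M) :
    (∏ i ∈ u, g i) * ∏ i ∈ v, g i = ∏ i ∈ u ∪ v, g i * (if i ∈ u ∩ v then g i else 1) := by
  rw [← prod_union_inter, prod_mul_distrib, prod_ite_mem, inter_eq_right.mpr inter_subset_union]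

end Finset

namespace MeasureTheory

variable {ι : Type*} [Fintype ι] [DecidableEq ι] {α : ι → Type*} [∀ i, MeasurableSpace (α i)]
  {μ : ∀ i, Measure (α i)}

theorem integral_pi_finset_prod [∀ i, IsProbabilityMeasure (μ i)] (s : Finset ι)
    (f : ∀ i, α i → ℝ) :
    ∫ x, ∏ i ∈ s, f i (x i) ∂Measure.pi μ = ∏ i ∈ s, ∫ t, f i t ∂μ i := by
  have h := integral_fintype_prod_eq_prod (μ := μ) (fun i => if i ∈ s then f i else fun _ => 1)
  simp only [apply_ite (fun g : α _ → ℝ => ∫ t, g t ∂μ _), integral_const, probReal_univ,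
    smul_eq_mul, mul_one, Fintype.prod_ite_mem] at h
  simpa only [ite_apply, Fintype.prod_ite_mem] using h

theorem Integrable.pi_finset_prod [∀ i, IsFiniteMeasure (μ i)] {s : Finset ι}
    {f : ∀ i, α i → ℝ} (hf : ∀ i ∈ s, Integrable (f i) (μ i)) :
    Integrable (fun x => ∏ i ∈ s, f i (x i)) (Measure.pi μ) := by
  have h := Integrable.fintype_prod_dep (μ := μ) (f := fun i => if i ∈ s then f i else fun _ => 1)
    fun i => by split_ifs with hi; exacts [hf i hi, integrable_const 1]
  simpa only [ite_apply, Fintype.prod_ite_mem] using h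

variable [∀ i, IsProbabilityMeasure (μ i)]

theorem integral_prod_mul_prod (u v : Finset ι) (f : ∀ i, α i → ℝ) :
    ∫ x, (∏ i ∈ u, f i (x i)) * ∏ i ∈ v, f i (x i) ∂Measure.pi μ =
      ∏ i ∈ u ∪ v, ∫ t, f i t * (if i ∈ u ∩ v then f i t else 1) ∂μ i := by
  simp only [Finset.prod_mul_prod_eq_prod_union]
  exact integral_pi_finset_prod (u ∪ v) fun i t => f i t * if i ∈ u ∩ v then f i t else 1

variable {f : ∀ i, α i → ℝ}

theorem integrable_prod_mul_prod (hf : ∀ i, MemLp (f i) 2 (μ i)) (u v : Finset ι) :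
    Integrable (fun x => (∏ i ∈ u, f i (x i)) * ∏ i ∈ v, f i (x i)) (Measure.pi μ) := by
  simp only [Finset.prod_mul_prod_eq_prod_union]
  refine Integrable.pi_finset_prod (f := fun i t => f i t * if i ∈ u ∩ v then f i t else 1)
    fun i _ => ?_
  split_ifs
  · simpa only [sq] using (hf i).integrable_sq
  · simpa only [mul_one] using (hf i).integrable one_le_two

theorem integral_prod_mul_prod_of_integral_eq_zero (hf : ∀ i, ∫ t, f i t ∂μ i = 0)
    (u v : Finset ι) :
    ∫ x, (∏ i ∈ u, f i (x i)) * ∏ i ∈ v, f i (x i) ∂Measure.pi μ =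
      if u = v then ∏ i ∈ u, ∫ t, f i t ^ 2 ∂μ i else 0 := by
  rw [integral_prod_mul_prod]
  split_ifs with huv
  · subst huv
    simp only [union_self, inter_self, sq]
    exact prod_congr rfl fun i hi => by simp only [if_pos hi]
  · obtain ⟨i, hi⟩ := symmDiff_nonempty.mpr huv
    rw [mem_symmDiff] at hi
    have hi_inter : i ∉ u ∩ v := by grind
    refine prod_eq_zero (i := i) (by grind) ?_
    simp [hi_inter, hf]

theorem integral_sum_prod_sq (hf0 : ∀ i, ∫ t, f i t ∂μ i = 0) (hf2 : ∀ i, MemLp (f i) 2 (μ i))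
    (S : Finset (Finset ι)) :
    ∫ x, (∑ u ∈ S, ∏ i ∈ u, f i (x i)) ^ 2 ∂Measure.pi μ =
      ∑ u ∈ S, ∏ i ∈ u, ∫ t, f i t ^ 2 ∂μ i := by
  simp only [sq (∑ u ∈ S, _), sum_mul_sum]
  rw [integral_finsetSum _ fun u _ => integrable_finsetSum _ fun v _ =>
    integrable_prod_mul_prod hf2 u v]
  refine sum_congr rfl fun u hu => ?_
  rw [integral_finsetSum _ fun v _ => integrable_prod_mul_prod hf2 u v]
  simp only [integral_prod_mul_prod_of_integral_eq_zero hf0]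
  rw [sum_ite_eq, if_pos hu]

end MeasureTheory

theorem univariate_fdd_exact_for_product_structure
    {N : ℕ} (μ : Fin N → Measure ℝ) [∀ i, IsProbabilityMeasure (μ i)]
    (y₀ : ℝ) (hy₀ : y₀ ≠ 0)
    (Y1 : Fin N → ℝ → ℝ) (σ2 : Fin N → ℝ)
    (hmem : ∀ i, MemLp (Y1 i) 2 (μ i))
    (hzero : ∀ i, ∫ t, Y1 i t ∂(μ i) = 0)
    (hσ : ∀ i, σ2 i = ∫ t, (Y1 i t) ^ 2 ∂(μ i))
    (y : (Fin N → ℝ) → ℝ)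
    (hy : ∀ x, y x = y₀ + (∑ i, Y1 i (x i)) +
      ∑ u ∈ univ.filter (fun u : Finset (Fin N) => 2 ≤ u.card),
        y₀ * ∏ i ∈ u, (Y1 i (x i) / y₀))
    (yA1 yF1 : (Fin N → ℝ) → ℝ)
    (hyA1 : ∀ x, yA1 x = y₀ + ∑ i, Y1 i (x i))
    (hyF1 : ∀ x, yF1 x = y₀ * ∏ i, (y₀ + Y1 i (x i)) / y₀) :
    (∀ x, yF1 x = y x) ∧
    (∫ x, (y x - yA1 x) ^ 2 ∂(Measure.pi μ) =
      y₀ ^ 2 * ∑ u ∈ univ.filter (fun u : Finset (Fin N) => 2 ≤ u.card),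
        ∏ i ∈ u, σ2 i / y₀ ^ 2) ∧
    ((∃ u : Finset (Fin N), 2 ≤ u.card ∧ 0 < ∏ i ∈ u, σ2 i / y₀ ^ 2) →
      0 < ∫ x, (y x - yA1 x) ^ 2 ∂(Measure.pi μ)) := by
  have hexact : ∀ x, yF1 x = y x := fun x => by rw [hyF1, hy, mul_prod_add_div_eq hy₀]
  set S := univ.filter (fun u : Finset (Fin N) => 2 ≤ u.card)
  set f : Fin N → ℝ → ℝ := fun i t => Y1 i t / y₀
  have hmse : ∫ x, (y x - yA1 x) ^ 2 ∂(Measure.pi μ) =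
      y₀ ^ 2 * ∑ u ∈ S, ∏ i ∈ u, σ2 i / y₀ ^ 2 := by
    have hdiff : ∀ x, y x - yA1 x = y₀ * ∑ u ∈ S, ∏ i ∈ u, f i (x i) := fun x => by
      rw [hy, hyA1, mul_sum]; ring
    have hf0 : ∀ i, ∫ t, f i t ∂μ i = 0 := fun i => by simp only [f, integral_div, hzero, zero_div]
    have hf2 : ∀ i, MemLp (f i) 2 (μ i) := fun i => by
      simpa only [f, div_eq_mul_inv] using (hmem i).mul_const y₀⁻¹
    have hfσ : ∀ i, ∫ t, f i t ^ 2 ∂μ i = σ2 i / y₀ ^ 2 := fun i => by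
      simp only [f, div_pow, integral_div, hσ]
    simp_rw [hdiff, mul_pow]
    rw [integral_const_mul, integral_sum_prod_sq hf0 hf2]
    simp only [hfσ]
  refine ⟨hexact, hmse, fun ⟨u, hu, hpos⟩ => ?_⟩
  have hσ_nonneg : ∀ i, 0 ≤ σ2 i := fun i => hσ i ▸ integral_nonneg fun t => sq_nonneg _
  rw [hmse]
  exact mul_pos (by positivity) (sum_pos' (fun v _ => prod_nonneg fun i _ =>
    div_nonneg (hσ_nonneg i) (sq_nonneg _)) ⟨u, mem_filter.mpr ⟨mem_univ u, hu⟩, hpos⟩)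
end

section
/- For a purely additive function y = μ_0 + Σ_i g_i(X_i), the univariate ADD approximation is exact (ẽ_1 = 0), while the univariate FDD approximation has mean-squared error ê_1 = y_∅² E[Σ_{|u|≥2} ∏_{i∈u} (y_{i}(X_i)/y_∅)]² ≥ 0, where y_{i}(X_i) = g_i(X_i) − μ_i and y_∅ = μ_0 + Σ_i μ_i ≠ 0. -/
/-!
Writing `dᵢ = gᵢ(Xᵢ) - μᵢ`, additivity gives `y = y_∅ + ∑ᵢ dᵢ`, which is literally the univariate
ADD approximation. The FDD approximation is `y_∅ ∏ᵢ (1 + dᵢ / y_∅)`; expanding the product over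
subsets `u`, the terms with `|u| ≤ 1` reproduce `y_∅ + ∑ᵢ dᵢ = y`, so the pointwise FDD error is
exactly `y_∅` times the sum over `|u| ≥ 2`, and the mean-squared error is its integral.
-/

open MeasureTheory Finset

theorem Finset.sum_finset_eq_empty_add_sum_singleton_add {ι M : Type*} [Fintype ι]
    [AddCommMonoid M] (f : Finset ι → M) :
    ∑ u, f u = f ∅ + ∑ i, f {i} + ∑ u ∈ univ.filter (fun u : Finset ι => 2 ≤ u.card), f u := by
  classical
  have card_lt_two : univ.filter (fun u : Finset ι => ¬ 2 ≤ u.card) =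
      insert ∅ (univ.map ⟨_, singleton_injective⟩) := by
    ext u
    simp only [mem_filter, mem_univ, true_and, not_le, Nat.lt_succ_iff,
      Nat.le_one_iff_eq_zero_or_eq_one, card_eq_zero, card_eq_one, mem_insert, mem_map,
      Function.Embedding.coeFn_mk, eq_comm (a := u)]
  rw [← sum_filter_not_add_sum_filter _ (fun u : Finset ι => 2 ≤ u.card), card_lt_two,
    sum_insert (by simp), sum_map]
  rfl

theorem Finset.prod_one_add_eq_one_add_sum_add {ι R : Type*} [Fintype ι] [CommSemiring R]
    (a : ι → R) :
    ∏ i, (1 + a i) = 1 + ∑ i, a i +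
      ∑ u ∈ univ.filter (fun u : Finset ι => 2 ≤ u.card), ∏ i ∈ u, a i := by
  rw [prod_one_add, powerset_univ, sum_finset_eq_empty_add_sum_singleton_add]
  simp only [prod_empty, prod_singleton]

theorem Finset.mul_prod_one_add_div {ι K : Type*} [Fintype ι] [Field K] {c : K} (hc : c ≠ 0)
    (d : ι → K) :
    c * ∏ i, (1 + d i / c) = c + ∑ i, d i +
      c * ∑ u ∈ univ.filter (fun u : Finset ι => 2 ≤ u.card), ∏ i ∈ u, d i / c := by
  rw [prod_one_add_eq_one_add_sum_add, mul_add, mul_add, mul_one, mul_sum]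
  simp only [mul_div_cancel₀ _ hc]

theorem univariate_add_exact_for_additive_general
    {N : ℕ} (μ : Fin N → Measure ℝ)
    (μ₀ : ℝ) (g : Fin N → ℝ → ℝ) (μm : Fin N → ℝ)
    (y₀ : ℝ) (hy₀def : y₀ = μ₀ + ∑ i, μm i) (hy₀ : y₀ ≠ 0)
    (y : (Fin N → ℝ) → ℝ) (hy : ∀ x, y x = μ₀ + ∑ i, g i (x i))
    (yA1 yF1 : (Fin N → ℝ) → ℝ)
    (hyA1 : ∀ x, yA1 x = y₀ + ∑ i, (g i (x i) - μm i))
    (hyF1 : ∀ x, yF1 x = y₀ * ∏ i, (y₀ + g i (x i) - μm i) / y₀) :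
    (∀ x, yA1 x = y x) ∧
    (∫ x, (y x - yA1 x) ^ 2 ∂(Measure.pi μ) = 0) ∧
    (∫ x, (y x - yF1 x) ^ 2 ∂(Measure.pi μ) =
      y₀ ^ 2 * ∫ x, (∑ u ∈ univ.filter (fun u : Finset (Fin N) => 2 ≤ u.card),
        ∏ i ∈ u, ((g i (x i) - μm i) / y₀)) ^ 2 ∂(Measure.pi μ)) ∧
    (0 ≤ ∫ x, (y x - yF1 x) ^ 2 ∂(Measure.pi μ)) := by
  have hyA : ∀ x, yA1 x = y x := fun x => by
    rw [hyA1, hy, hy₀def, sum_sub_distrib]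
    ring
  have hyF : ∀ x, (y x - yF1 x) ^ 2 = y₀ ^ 2 *
      (∑ u ∈ univ.filter (fun u : Finset (Fin N) => 2 ≤ u.card),
        ∏ i ∈ u, ((g i (x i) - μm i) / y₀)) ^ 2 := fun x => by
    simp_rw [add_sub_assoc, add_div, div_self hy₀] at hyF1
    rw [hyF1, mul_prod_one_add_div hy₀, ← hyA, hyA1]
    ring
  refine ⟨hyA, by simp [hyA], ?_, integral_nonneg fun _ => sq_nonneg _⟩
  simp_rw [hyF, integral_const_mul]

theorem univariate_add_exact_for_additive
    {N : ℕ} (μ : Fin N → Measure ℝ) [∀ i, IsProbabilityMeasure (μ i)]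
    (μ₀ : ℝ) (g : Fin N → ℝ → ℝ) (μm : Fin N → ℝ)
    (hmem : ∀ i, MemLp (g i) 2 (μ i))
    (hμm : ∀ i, μm i = ∫ t, g i t ∂(μ i))
    (y₀ : ℝ) (hy₀def : y₀ = μ₀ + ∑ i, μm i) (hy₀ : y₀ ≠ 0)
    (y : (Fin N → ℝ) → ℝ) (hy : ∀ x, y x = μ₀ + ∑ i, g i (x i))
    (yA1 yF1 : (Fin N → ℝ) → ℝ)
    (hyA1 : ∀ x, yA1 x = y₀ + ∑ i, (g i (x i) - μm i))
    (hyF1 : ∀ x, yF1 x = y₀ * ∏ i, (y₀ + g i (x i) - μm i) / y₀) :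
    (∀ x, yA1 x = y x) ∧
    (∫ x, (y x - yA1 x) ^ 2 ∂(Measure.pi μ) = 0) ∧
    (∫ x, (y x - yF1 x) ^ 2 ∂(Measure.pi μ) =
      y₀ ^ 2 * ∫ x, (∑ u ∈ univ.filter (fun u : Finset (Fin N) => 2 ≤ u.card),
        ∏ i ∈ u, ((g i (x i) - μm i) / y₀)) ^ 2 ∂(Measure.pi μ)) ∧
    (0 ≤ ∫ x, (y x - yF1 x) ^ 2 ∂(Measure.pi μ)) :=
  univariate_add_exact_for_additive_general μ μ₀ g μm y₀ hy₀def hy₀ y hy yA1 yF1 hyA1 hyF1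
end
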